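/- arXiv:math/0409045 — 4 statements merged into one kernel-verified Lean document; each statement's English description precedes it below -/
import Mathlib

section
/- Suppose there is a common Lipschitz constant L such that for all ω and n, the functions f_n(ω, ·) and f(ω, ·) from [y₁, y₂] to ℝ are Lipschitz continuous with constant L, and for every rational y ∈ (y₁, y₂), f_n(y) → f(y) almost surely. If X_n is any sequence of random variables with values in [y₁, y₂], then |f_n(X_n) − f(X_n)| → 0 almost surely. -/
open Set Filter MeasureTheory

/-- Corollary `plug`: plugging random variables into uniformly Lipschitz random
functions converging a.s. at the rationals. -/
theorem stmt_4 {Ω : Type*} [MeasurableSpace Ω] (μ : Measure Ω) [IsProbabilityMeasure μ]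
    (y₁ y₂ : ℝ) (hy : y₁ < y₂) (f : Ω → ℝ → ℝ) (fn : ℕ → Ω → ℝ → ℝ) (L : NNReal)
    (hLipn : ∀ n ω, LipschitzOnWith L (fn n ω) (Icc y₁ y₂))
    (hLip : ∀ ω, LipschitzOnWith L (f ω) (Icc y₁ y₂))
    (hconv : ∀ q : ℚ, (q : ℝ) ∈ Ioo y₁ y₂ →
      ∀ᵐ ω ∂μ, Tendsto (fun n => fn n ω q) atTop (nhds (f ω q)))
    (X : ℕ → Ω → ℝ) (hX : ∀ n ω, X n ω ∈ Icc y₁ y₂) :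
    ∀ᵐ ω ∂μ, Tendsto (fun n => |fn n ω (X n ω) - f ω (X n ω)|) atTop (nhds 0) := by
  have key : ∀ᵐ ω ∂μ, ∀ q : ℚ, (q : ℝ) ∈ Ioo y₁ y₂ →
      Tendsto (fun n => fn n ω q) atTop (nhds (f ω q)) := by
    rw [ae_all_iff]
    intro q
    by_cases hq : (q : ℝ) ∈ Ioo y₁ y₂
    · filter_upwards [hconv q hq] with ω h _
      exact h
    · exact ae_of_all _ fun ω h => absurd h hq
  filter_upwards [key] with ω H
  rw [Metric.tendsto_atTop]
  intro ε hε
  set δ : ℝ := ε / (4 * (L + 1)) with hδdef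
  have hδ : 0 < δ := by positivity
  have hLδ : (L : ℝ) * δ ≤ ε / 4 := by
    rw [hδdef]
    rw [mul_div_assoc', div_le_div_iff₀ (by positivity) (by norm_num)]
    nlinarith [L.coe_nonneg, hε.le]
  have hcover : Icc y₁ y₂ ⊆ ⋃ q : {q : ℚ // (q : ℝ) ∈ Ioo y₁ y₂}, Metric.ball (q : ℝ) δ := by
    intro x hx
    obtain ⟨hx1, hx2⟩ := hx
    have h1 : max y₁ (x - δ) < min y₂ (x + δ) := by
      rw [max_lt_iff, lt_min_iff, lt_min_iff]
      exact ⟨⟨hy, by linarith⟩, by linarith, by linarith⟩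
    obtain ⟨q, hq1, hq2⟩ := exists_rat_btwn h1
    rw [max_lt_iff] at hq1
    rw [lt_min_iff] at hq2
    refine mem_iUnion.mpr ⟨⟨q, ⟨hq1.1, hq2.1⟩⟩, ?_⟩
    rw [Metric.mem_ball, Real.dist_eq, abs_lt]
    constructor <;> [linarith [hq2.2]; linarith [hq1.2]]
  obtain ⟨t, ht⟩ := isCompact_Icc.elim_finite_subcover
    (fun q : {q : ℚ // (q : ℝ) ∈ Ioo y₁ y₂} => Metric.ball (q : ℝ) δ)
    (fun q => Metric.isOpen_ball) hcover
  have hev : ∀ᶠ n in atTop, ∀ q ∈ t, |fn n ω q - f ω q| < ε / 2 := by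
    rw [eventually_all_finset]
    intro q hq
    obtain ⟨N, hN⟩ := Metric.tendsto_atTop.mp (H q q.2) (ε / 2) (half_pos hε)
    exact eventually_atTop.mpr ⟨N, fun n hn => by
      rw [← Real.dist_eq]; exact hN n hn⟩
  obtain ⟨N, hN⟩ := eventually_atTop.mp hev
  refine ⟨N, fun n hn => ?_⟩
  obtain ⟨q, hqt, hqball⟩ := mem_iUnion₂.mp (ht (hX n ω))
  have hqIcc : (q : ℝ) ∈ Icc y₁ y₂ := Ioo_subset_Icc_self q.2
  have hd : |X n ω - (q : ℝ)| ≤ δ := by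
    rw [← Real.dist_eq]; exact (Metric.mem_ball.mp hqball).le
  have e1 : |fn n ω (X n ω) - fn n ω q| ≤ (L : ℝ) * δ := by
    have h := (hLipn n ω).dist_le_mul _ (hX n ω) _ hqIcc
    rw [Real.dist_eq, Real.dist_eq] at h
    calc |fn n ω (X n ω) - fn n ω q| ≤ (L : ℝ) * |X n ω - q| := h
      _ ≤ (L : ℝ) * δ := mul_le_mul_of_nonneg_left hd L.coe_nonneg
  have e2 : |f ω q - f ω (X n ω)| ≤ (L : ℝ) * δ := by
    have h := (hLip ω).dist_le_mul _ hqIcc _ (hX n ω)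
    rw [Real.dist_eq, Real.dist_eq] at h
    calc |f ω q - f ω (X n ω)| ≤ (L : ℝ) * |(q : ℝ) - X n ω| := h
      _ ≤ (L : ℝ) * δ := mul_le_mul_of_nonneg_left (by rw [abs_sub_comm]; exact hd) L.coe_nonneg
  have e3 : |fn n ω q - f ω q| < ε / 2 := hN n hn q hqt
  rw [Real.dist_0_eq_abs, abs_abs]
  have tri : |fn n ω (X n ω) - f ω (X n ω)| ≤
      |fn n ω (X n ω) - fn n ω q| + |fn n ω q - f ω q| + |f ω q - f ω (X n ω)| := by
    calc |fn n ω (X n ω) - f ω (X n ω)| ≤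
        |fn n ω (X n ω) - f ω q| + |f ω q - f ω (X n ω)| := abs_sub_le _ _ _
      _ ≤ |fn n ω (X n ω) - fn n ω q| + |fn n ω q - f ω q| + |f ω q - f ω (X n ω)| := by
          have := abs_sub_le (fn n ω (X n ω)) (fn n ω q) (f ω q)
          linarith
  linarith
end

section
/- Let I = [x₁, x₂] be a closed interval, y₁ < y₂ reals, f : I × [y₁, y₂] → ℝ continuous with f(x, y₁) = f(x, y₂) = 0 for all x ∈ I, and C : I → [0, ∞) continuous with |f(x, y) − f(x, z)| ≤ C(x)|y − z| for all x ∈ I and y, z ∈ [y₁, y₂]. Then for every x₀ ∈ I and y₀ ∈ [y₁, y₂], there is a unique solution y(x) of y'(x) = f(x, y(x)) with y(x₀) = y₀, this solution is defined on all of I, and y(x) ∈ [y₁, y₂] for all x ∈ I. -/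
/-!
Clamping the state variable into `[y₁, y₂]` turns `f` into a field that is globally Lipschitz in
`y` and bounded, so Picard–Lindelöf gives a solution on the whole interval. The constants `y₁` and
`y₂` are solutions of the clamped equation, so by uniqueness a solution that reaches one of them
stays there; by the intermediate value theorem it therefore never leaves `[y₁, y₂]`, where the
clamped field agrees with `f`.
-/

open Set Metric
open scoped NNReal Topology

section Uniqueness

variable {E : Type*} [NormedAddCommGroup E] [NormedSpace ℝ E]
  {v : ℝ → E → E} {s : ℝ → Set E} {K : ℝ≥0} {a b t₀ : ℝ} {α β : ℝ → E}

theorem ODE_solution_unique_of_mem_Icc_of_hasDerivWithinAt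
    (hv : ∀ t ∈ Icc a b, LipschitzOnWith K (v t) (s t)) (ht₀ : t₀ ∈ Icc a b)
    (hα : ∀ t ∈ Icc a b, HasDerivWithinAt α (v t (α t)) (Icc a b) t)
    (hαs : ∀ t ∈ Icc a b, α t ∈ s t)
    (hβ : ∀ t ∈ Icc a b, HasDerivWithinAt β (v t (β t)) (Icc a b) t)
    (hβs : ∀ t ∈ Icc a b, β t ∈ s t)
    (heq : α t₀ = β t₀) :
    EqOn α β (Icc a b) := by
  have hαc : ContinuousOn α (Icc a b) := fun t ht => (hα t ht).continuousWithinAt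
  have hβc : ContinuousOn β (Icc a b) := fun t ht => (hβ t ht).continuousWithinAt
  rw [← Icc_union_Icc_eq_Icc ht₀.1 ht₀.2]
  refine EqOn.union ?_ ?_
  · have hsub : Icc a t₀ ⊆ Icc a b := Icc_subset_Icc_right ht₀.2
    have hmem {t} (ht : t ∈ Ioc a t₀) : t ∈ Icc a b := hsub (Ioc_subset_Icc_self ht)
    have hnhds {t} (ht : t ∈ Ioc a t₀) : Icc a b ∈ 𝓝[≤] t :=
      Icc_mem_nhdsLE_of_mem ⟨ht.1, ht.2.trans ht₀.2⟩
    exact ODE_solution_unique_of_mem_Icc_left (fun t ht => hv t (hmem ht)) (hαc.mono hsub)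
      (fun t ht => (hα t (hmem ht)).mono_of_mem_nhdsWithin (hnhds ht))
      (fun t ht => hαs t (hmem ht)) (hβc.mono hsub)
      (fun t ht => (hβ t (hmem ht)).mono_of_mem_nhdsWithin (hnhds ht))
      (fun t ht => hβs t (hmem ht)) heq
  · have hsub : Icc t₀ b ⊆ Icc a b := Icc_subset_Icc_left ht₀.1
    have hmem {t} (ht : t ∈ Ico t₀ b) : t ∈ Icc a b := hsub (Ico_subset_Icc_self ht)
    have hnhds {t} (ht : t ∈ Ico t₀ b) : Icc a b ∈ 𝓝[≥] t :=
      Icc_mem_nhdsGE_of_mem ⟨ht₀.1.trans ht.1, ht.2⟩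
    exact ODE_solution_unique_of_mem_Icc_right (fun t ht => hv t (hmem ht)) (hαc.mono hsub)
      (fun t ht => (hα t (hmem ht)).mono_of_mem_nhdsWithin (hnhds ht))
      (fun t ht => hαs t (hmem ht)) (hβc.mono hsub)
      (fun t ht => (hβ t (hmem ht)).mono_of_mem_nhdsWithin (hnhds ht))
      (fun t ht => hβs t (hmem ht)) heq

end Uniqueness

theorem exists_forall_mem_Icc_hasDerivWithinAt_of_lipschitzWith
    {E : Type*} [NormedAddCommGroup E] [NormedSpace ℝ E] [CompleteSpace E]
    {v : ℝ → E → E} {K L : ℝ≥0} {a b t₀ : ℝ}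
    (hv : ∀ t ∈ Icc a b, LipschitzWith K (v t)) (hcont : ∀ x, ContinuousOn (v · x) (Icc a b))
    (hbound : ∀ t ∈ Icc a b, ∀ x, ‖v t x‖ ≤ L) (ht₀ : t₀ ∈ Icc a b) (x₀ : E) :
    ∃ α : ℝ → E, α t₀ = x₀ ∧ ∀ t ∈ Icc a b, HasDerivWithinAt α (v t (α t)) (Icc a b) t := by
  have hab : 0 ≤ b - a := by linarith [ht₀.1, ht₀.2]
  have hpl : IsPicardLindelof v (⟨t₀, ht₀⟩ : Icc a b) x₀ (L * ⟨b - a, hab⟩) 0 L K :=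
    { lipschitzOnWith := fun t ht => (hv t ht).lipschitzOnWith
      continuousOn := fun x _ => hcont x
      norm_le := fun t ht x _ => hbound t ht x
      mul_max_le := by
        simp only [NNReal.coe_zero, sub_zero]
        exact mul_le_mul_of_nonneg_left (max_le (by linarith [ht₀.1]) (by linarith [ht₀.2]))
          L.2 }
  exact hpl.exists_eq_forall_mem_Icc_hasDerivWithinAt₀

section Invariance

variable {v : ℝ → ℝ → ℝ} {K : ℝ≥0} {a b c t₀ t₁ y₁ y₂ : ℝ} {y : ℝ → ℝ}

theorem eq_of_mem_uIcc_of_equilibrium (hv : ∀ t ∈ Icc a b, LipschitzWith K (v t))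
    (hc : ∀ t ∈ Icc a b, v t c = 0)
    (hy : ∀ t ∈ Icc a b, HasDerivWithinAt y (v t (y t)) (Icc a b) t)
    (ht₀ : t₀ ∈ Icc a b) (ht₁ : t₁ ∈ Icc a b) (hcy : c ∈ uIcc (y t₀) (y t₁)) :
    y t₁ = c := by
  have hsub : uIcc t₀ t₁ ⊆ Icc a b := uIcc_subset_Icc ht₀ ht₁
  obtain ⟨s, hs, hys⟩ := intermediate_value_uIcc
    (fun t ht => (hy t (hsub ht)).continuousWithinAt.mono hsub) hcy
  have hconst : ∀ t ∈ Icc a b, HasDerivWithinAt (fun _ => c) (v t c) (Icc a b) t :=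
    fun t ht => hc t ht ▸ hasDerivWithinAt_const _ _ _
  exact ODE_solution_unique_of_mem_Icc_of_hasDerivWithinAt (s := fun _ => univ)
    (fun t ht => (hv t ht).lipschitzOnWith) (hsub hs) hy (fun _ _ => trivial) hconst
    (fun _ _ => trivial) hys ht₁

theorem mapsTo_Icc_of_equilibria (hv : ∀ t ∈ Icc a b, LipschitzWith K (v t))
    (hv₁ : ∀ t ∈ Icc a b, v t y₁ = 0) (hv₂ : ∀ t ∈ Icc a b, v t y₂ = 0)
    (hy : ∀ t ∈ Icc a b, HasDerivWithinAt y (v t (y t)) (Icc a b) t)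
    (ht₀ : t₀ ∈ Icc a b) (hy₀ : y t₀ ∈ Icc y₁ y₂) :
    MapsTo y (Icc a b) (Icc y₁ y₂) := by
  intro t ht
  by_contra hyt
  rcases not_and_or.mp hyt with hlt | hlt <;> rw [not_le] at hlt
  · have := eq_of_mem_uIcc_of_equilibrium hv hv₁ hy ht₀ ht
      ⟨min_le_of_right_le hlt.le, le_max_of_le_left hy₀.1⟩
    linarith
  · have := eq_of_mem_uIcc_of_equilibrium hv hv₂ hy ht₀ ht
      ⟨min_le_of_left_le hy₀.2, le_max_of_le_right hlt.le⟩
    linarith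

end Invariance

theorem exists_lipschitzOnWith_of_continuousOn_mul_bound {X : Type*} [TopologicalSpace X]
    {s : Set X} {t : Set ℝ} (hs : IsCompact s) {f : X → ℝ → ℝ} {C : X → ℝ}
    (hC : ContinuousOn C s) (hlip : ∀ x ∈ s, ∀ y ∈ t, ∀ z ∈ t, |f x y - f x z| ≤ C x * |y - z|) :
    ∃ K : ℝ≥0, ∀ x ∈ s, LipschitzOnWith K (f x) t := by
  obtain ⟨K₀, hK₀⟩ := hs.exists_bound_of_continuousOn hC
  refine ⟨K₀.toNNReal, fun x hx => LipschitzOnWith.of_dist_le_mul fun y hy z hz => ?_⟩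
  calc dist (f x y) (f x z) ≤ C x * dist y z := hlip x hx y hy z hz
    _ ≤ K₀.toNNReal * dist y z := by
      gcongr
      exact (le_abs_self _).trans ((hK₀ x hx).trans (Real.le_coe_toNNReal K₀))

theorem exists_mapsTo_Icc_hasDerivWithinAt_of_boundary_zero {x₁ x₂ y₁ y₂ x₀ y₀ : ℝ}
    (hy : y₁ ≤ y₂) {f : ℝ → ℝ → ℝ} {K : ℝ≥0}
    (hf : ContinuousOn (fun p : ℝ × ℝ => f p.1 p.2) (Icc x₁ x₂ ×ˢ Icc y₁ y₂))
    (hb1 : ∀ x ∈ Icc x₁ x₂, f x y₁ = 0) (hb2 : ∀ x ∈ Icc x₁ x₂, f x y₂ = 0)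
    (hK : ∀ x ∈ Icc x₁ x₂, LipschitzOnWith K (f x) (Icc y₁ y₂))
    (hx₀ : x₀ ∈ Icc x₁ x₂) (hy₀ : y₀ ∈ Icc y₁ y₂) :
    ∃ y : ℝ → ℝ, y x₀ = y₀ ∧ MapsTo y (Icc x₁ x₂) (Icc y₁ y₂) ∧
      ∀ x ∈ Icc x₁ x₂, HasDerivWithinAt y (f x (y x)) (Icc x₁ x₂) x := by
  set g : ℝ → ℝ → ℝ := fun x z => f x (projIcc y₁ y₂ hy z)
  have hg_eq {x z} (hz : z ∈ Icc y₁ y₂) : g x z = f x z := by simp [g, projIcc_of_mem hy hz]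
  have hg_lip : ∀ x ∈ Icc x₁ x₂, LipschitzWith K (g x) := fun x hx => by
    have h := (hK x hx).to_restrict.comp (LipschitzWith.projIcc hy)
    rw [mul_one] at h
    exact h
  have hg_cont (z : ℝ) : ContinuousOn (g · z) (Icc x₁ x₂) :=
    hf.comp (continuousOn_id.prodMk continuousOn_const) fun x hx => ⟨hx, (projIcc y₁ y₂ hy z).2⟩
  obtain ⟨M, hM⟩ := (isCompact_Icc.prod isCompact_Icc).exists_bound_of_continuousOn hf
  have hg_bound : ∀ x ∈ Icc x₁ x₂, ∀ z, ‖g x z‖ ≤ M.toNNReal := fun x hx z =>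
    (hM (x, _) ⟨hx, (projIcc y₁ y₂ hy z).2⟩).trans (Real.le_coe_toNNReal M)
  obtain ⟨y, hy0, hyd⟩ :=
    exists_forall_mem_Icc_hasDerivWithinAt_of_lipschitzWith hg_lip hg_cont hg_bound hx₀ y₀
  have hmaps : MapsTo y (Icc x₁ x₂) (Icc y₁ y₂) :=
    mapsTo_Icc_of_equilibria hg_lip (fun x hx => (hg_eq ⟨le_rfl, hy⟩).trans (hb1 x hx))
      (fun x hx => (hg_eq ⟨hy, le_rfl⟩).trans (hb2 x hx)) hyd hx₀ (hy0 ▸ hy₀)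
  exact ⟨y, hy0, hmaps, fun x hx => hg_eq (hmaps hx) ▸ hyd x hx⟩

theorem stmt_8_general (x₁ x₂ y₁ y₂ : ℝ) (hy : y₁ < y₂)
    (f : ℝ → ℝ → ℝ) (C : ℝ → ℝ)
    (hf : ContinuousOn (fun p : ℝ × ℝ => f p.1 p.2) (Icc x₁ x₂ ×ˢ Icc y₁ y₂))
    (hb1 : ∀ x ∈ Icc x₁ x₂, f x y₁ = 0) (hb2 : ∀ x ∈ Icc x₁ x₂, f x y₂ = 0)
    (hC : ContinuousOn C (Icc x₁ x₂))
    (hlip : ∀ x ∈ Icc x₁ x₂, ∀ y ∈ Icc y₁ y₂, ∀ z ∈ Icc y₁ y₂,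
      |f x y - f x z| ≤ C x * |y - z|) :
    ∀ x₀ ∈ Icc x₁ x₂, ∀ y₀ ∈ Icc y₁ y₂,
      (∃ y : ℝ → ℝ, y x₀ = y₀ ∧ (∀ x ∈ Icc x₁ x₂, y x ∈ Icc y₁ y₂) ∧
        ∀ x ∈ Icc x₁ x₂, HasDerivWithinAt y (f x (y x)) (Icc x₁ x₂) x) ∧
      (∀ y z : ℝ → ℝ, y x₀ = y₀ → z x₀ = y₀ →
        (∀ x ∈ Icc x₁ x₂, y x ∈ Icc y₁ y₂) → (∀ x ∈ Icc x₁ x₂, z x ∈ Icc y₁ y₂) →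
        (∀ x ∈ Icc x₁ x₂, HasDerivWithinAt y (f x (y x)) (Icc x₁ x₂) x) →
        (∀ x ∈ Icc x₁ x₂, HasDerivWithinAt z (f x (z x)) (Icc x₁ x₂) x) →
        ∀ x ∈ Icc x₁ x₂, y x = z x) := by
  intro x₀ hx₀ y₀ hy₀
  obtain ⟨K, hK⟩ := exists_lipschitzOnWith_of_continuousOn_mul_bound isCompact_Icc hC hlip
  refine ⟨exists_mapsTo_Icc_hasDerivWithinAt_of_boundary_zero hy.le hf hb1 hb2 hK hx₀ hy₀,
    fun y z hy0 hz0 hymem hzmem hyd hzd => ?_⟩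
  exact ODE_solution_unique_of_mem_Icc_of_hasDerivWithinAt hK hx₀ hyd hymem hzd hzmem
    (hy0.trans hz0.symm)

/-- Existence, uniqueness and invariance of `[y₁, y₂]` for the ODE
`y' = f(x, y)` on a closed interval, when `f` vanishes on the boundary values. -/
theorem stmt_8 (x₁ x₂ y₁ y₂ : ℝ) (hx : x₁ ≤ x₂) (hy : y₁ < y₂)
    (f : ℝ → ℝ → ℝ) (C : ℝ → ℝ)
    (hf : ContinuousOn (fun p : ℝ × ℝ => f p.1 p.2) (Icc x₁ x₂ ×ˢ Icc y₁ y₂))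
    (hb1 : ∀ x ∈ Icc x₁ x₂, f x y₁ = 0) (hb2 : ∀ x ∈ Icc x₁ x₂, f x y₂ = 0)
    (hC : ContinuousOn C (Icc x₁ x₂)) (hC0 : ∀ x ∈ Icc x₁ x₂, 0 ≤ C x)
    (hlip : ∀ x ∈ Icc x₁ x₂, ∀ y ∈ Icc y₁ y₂, ∀ z ∈ Icc y₁ y₂,
      |f x y - f x z| ≤ C x * |y - z|) :
    ∀ x₀ ∈ Icc x₁ x₂, ∀ y₀ ∈ Icc y₁ y₂,
      (∃ y : ℝ → ℝ, y x₀ = y₀ ∧ (∀ x ∈ Icc x₁ x₂, y x ∈ Icc y₁ y₂) ∧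
        ∀ x ∈ Icc x₁ x₂, HasDerivWithinAt y (f x (y x)) (Icc x₁ x₂) x) ∧
      (∀ y z : ℝ → ℝ, y x₀ = y₀ → z x₀ = y₀ →
        (∀ x ∈ Icc x₁ x₂, y x ∈ Icc y₁ y₂) → (∀ x ∈ Icc x₁ x₂, z x ∈ Icc y₁ y₂) →
        (∀ x ∈ Icc x₁ x₂, HasDerivWithinAt y (f x (y x)) (Icc x₁ x₂) x) →
        (∀ x ∈ Icc x₁ x₂, HasDerivWithinAt z (f x (z x)) (Icc x₁ x₂) x) →
        ∀ x ∈ Icc x₁ x₂, y x = z x) :=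
  stmt_8_general x₁ x₂ y₁ y₂ hy f C hf hb1 hb2 hC hlip
end

section
/- Suppose Y and Y^{(t)} (for each t) are random variables satisfying: (consistency) Y^{(t)} = Y on the event {Y ≤ t} ∪ {Y^{(t)} ≤ t}, and (no instantaneous effect) Y^{(t)} = Y on {Y = t} ∪ {Y^{(t)} = t}. Then: (a) for all h ≥ 0, Y^{(t+h)} = Y on the event {Y ≤ t} ∪ ⋃_{h' ≥ 0} {Y^{(t+h')} ≤ t}; and (b) for all y ≤ t + h with h ≥ 0, the events {Y^{(t+h)} ≤ y} and {Y ≤ y} coincide. -/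
open Set

/-- Lemma on consistency of counterfactual survival times: treatment in the
future does not cause or prevent death at present. -/
theorem stmt_15 {Ω : Type*} (Y : Ω → ℝ) (Yc : ℝ → Ω → ℝ)
    (hcons : ∀ s : ℝ, ∀ ω, (Y ω < s ∨ Yc s ω < s) → Yc s ω = Y ω)
    (hinst : ∀ s : ℝ, ∀ ω, (Y ω = s ∨ Yc s ω = s) → Yc s ω = Y ω) (t : ℝ) :
    (∀ h : ℝ, 0 ≤ h → ∀ ω,
      (Y ω ≤ t ∨ ∃ h' : ℝ, 0 ≤ h' ∧ Yc (t + h') ω ≤ t) → Yc (t + h) ω = Y ω) ∧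
    (∀ h y : ℝ, 0 ≤ h → y ≤ t + h → ∀ ω, (Yc (t + h) ω ≤ y ↔ Y ω ≤ y)) := by
  have key : ∀ s : ℝ, ∀ ω, (Y ω ≤ s ∨ Yc s ω ≤ s) → Yc s ω = Y ω := by
    intro s ω hle
    rcases hle with hle | hle
    · rcases lt_or_eq_of_le hle with h | h
      · exact hcons s ω (Or.inl h)
      · exact hinst s ω (Or.inl h)
    · rcases lt_or_eq_of_le hle with h | h
      · exact hcons s ω (Or.inr h)
      · exact hinst s ω (Or.inr h)
  constructor
  · intro h hh ω hω
    have hY : Y ω ≤ t := by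
      rcases hω with h1 | ⟨h', hh', h2⟩
      · exact h1
      · have := key (t + h') ω (Or.inr (h2.trans (by linarith)))
        linarith [this ▸ h2]
    exact key (t + h) ω (Or.inl (by linarith))
  · intro h y hh hy ω
    constructor
    · intro hle
      have := key (t + h) ω (Or.inr (hle.trans hy))
      linarith
    · intro hle
      have := key (t + h) ω (Or.inl (hle.trans hy))
      linarith
end

section
/- Let G : [0, ∞) × [t, y₂] → ℝ with G(h, y) = (F_{Y^{(t)}}^{-1} ∘ F_{Y^{(t+h)}})(y) defined on the region {(h, y) : y ≥ t + h}, continuously differentiable there in (h, y) with continuous extension to the closed region, and suppose G(h, y) > t whenever y > t + h (withholding treatment in the future does not cause death at present). Define a := lim_{y → t⁺} D(y) where D(y) = −∂/∂h|_{h=0} G(h, y), and suppose this limit exists. Then a ≤ 1. -/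
open Set Filter

/-- The limiting infinitesimal shift at the diagonal is at most `1`:
if `G h y` (the quantile-quantile transform) satisfies `G 0 y = y`, is
differentiable in `h` on the region `{(h, y) : 0 ≤ h, t + h ≤ y ≤ y₂}` with
jointly continuous derivative, and `G h y > t` whenever `y > t + h`, then
`a = lim_{y ↓ t} (-∂G/∂h(0, y)) ≤ 1`. -/
theorem stmt_16 (t y₂ : ℝ) (hty : t < y₂) (G Gh : ℝ → ℝ → ℝ)
    (hG0 : ∀ y, t ≤ y → y ≤ y₂ → G 0 y = y)
    (hderiv : ∀ h y : ℝ, 0 ≤ h → t + h ≤ y → y ≤ y₂ →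
      HasDerivWithinAt (fun h' => G h' y) (Gh h y) {h' : ℝ | 0 ≤ h' ∧ t + h' ≤ y} h)
    (hcont : ContinuousOn (fun p : ℝ × ℝ => Gh p.1 p.2)
      {p : ℝ × ℝ | 0 ≤ p.1 ∧ t + p.1 ≤ p.2 ∧ p.2 ≤ y₂})
    (hpos : ∀ h y : ℝ, 0 ≤ h → t + h < y → y ≤ y₂ → t < G h y)
    (a : ℝ)
    (ha : Tendsto (fun y => -Gh 0 y) (nhdsWithin t (Ioi t)) (nhds a)) :
    a ≤ 1 := by
  by_contra hcon
  push_neg at hcon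
  set S : Set (ℝ × ℝ) := {p : ℝ × ℝ | 0 ≤ p.1 ∧ t + p.1 ≤ p.2 ∧ p.2 ≤ y₂} with hS
  set c : ℝ := (1 + a) / 2 with hc
  have hc1 : 1 < c := by rw [hc]; linarith
  have hca : c < a := by rw [hc]; linarith
  have hmem : ((0 : ℝ), t) ∈ S := by
    constructor
    · norm_num
    constructor
    · norm_num
    · exact le_of_lt hty
  have hcw : ContinuousWithinAt (fun p : ℝ × ℝ => Gh p.1 p.2) S ((0 : ℝ), t) :=
    hcont _ hmem
  -- Gh 0 t = -a
  have hmap : Tendsto (fun y : ℝ => ((0 : ℝ), y)) (nhdsWithin t (Ioi t))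
      (nhdsWithin ((0 : ℝ), t) S) := by
    rw [← nhdsWithin_Ioc_eq_nhdsGT hty, tendsto_nhdsWithin_iff]
    constructor
    · exact (Continuous.tendsto (continuous_const.prodMk continuous_id : Continuous fun y : ℝ => ((0:ℝ), y)) t).mono_left nhdsWithin_le_nhds
    · filter_upwards [self_mem_nhdsWithin] with y hy
      exact ⟨le_refl 0, by simpa using le_of_lt hy.1, hy.2⟩
  have hGht : Gh 0 t = -a := by
    have h2 := Filter.Tendsto.comp hcw.tendsto hmap
    have h3 : Tendsto (fun y => Gh 0 y) (nhdsWithin t (Ioi t)) (nhds (-a)) := by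
      simpa using ha.neg
    exact tendsto_nhds_unique h2 h3
  have hlt : Gh ((0 : ℝ), t).1 ((0 : ℝ), t).2 < -c := by simp [hGht]; linarith
  have hev : {p : ℝ × ℝ | Gh p.1 p.2 < -c} ∈ nhdsWithin ((0 : ℝ), t) S :=
    hcw (Iio_mem_nhds hlt)
  rw [Metric.mem_nhdsWithin_iff] at hev
  obtain ⟨δ, hδ, hball⟩ := hev
  -- choose y close to t
  set ε : ℝ := min δ (y₂ - t) with hε
  have hε0 : 0 < ε := lt_min hδ (by linarith)
  set y : ℝ := t + ε / 2 with hy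
  have hty' : t < y := by rw [hy]; linarith
  have hyy₂ : y ≤ y₂ := by
    have : ε ≤ y₂ - t := min_le_right _ _
    rw [hy]; linarith
  have hyt : y - t = ε / 2 := by rw [hy]; ring
  set h : ℝ := (y - t) / c with hh
  have hc0 : (0 : ℝ) < c := by linarith
  have hh0 : (0 : ℝ) < h := by
    rw [hh, hyt]; positivity
  have hhlt : h < y - t := by
    rw [hh]
    rw [div_lt_iff₀ hc0]
    nlinarith [hε0, hyt]
  have hεδ : ε ≤ δ := min_le_left _ _
  clear_value ε y h
  -- MVT on [0, h]
  have hcont' : ContinuousOn (fun h' => G h' y) (Icc 0 h) := by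
    intro x hx
    have hx1 : 0 ≤ x := hx.1
    have hx2 : t + x ≤ y := by have := hx.2; linarith
    exact ((hderiv x y hx1 hx2 hyy₂).continuousWithinAt).mono
      (fun z hz => ⟨hz.1, by have := hz.2; linarith⟩)
  have hd : ∀ x ∈ Ioo 0 h, HasDerivAt (fun h' => G h' y) (Gh x y) x := by
    intro x hx
    have hx2 : t + x ≤ y := by have := hx.2; linarith
    refine (hderiv x y (le_of_lt hx.1) hx2 hyy₂).hasDerivAt ?_
    rw [mem_nhds_iff]
    refine ⟨Ioo 0 (y - t), ?_, isOpen_Ioo, ⟨hx.1, lt_trans hx.2 hhlt⟩⟩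
    intro z hz
    exact ⟨le_of_lt hz.1, by have := hz.2; linarith⟩
  obtain ⟨ξ, hξ, heq⟩ := exists_hasDerivAt_eq_slope (fun h' => G h' y) (fun x => Gh x y)
    hh0 hcont' hd
  have hG0y : G 0 y = y := hG0 y (le_of_lt hty') hyy₂
  have hGhy : t < G h y := hpos h y (le_of_lt hh0) (by linarith) hyy₂
  -- Gh ξ y > -c
  have hslope : -c < Gh ξ y := by
    rw [heq, hG0y]
    rw [lt_div_iff₀ (by linarith : (0:ℝ) < h - 0)]
    have : h * c = y - t := by rw [hh]; field_simp
    nlinarith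
  -- but (ξ, y) is in the ball ∩ S, so Gh ξ y < -c
  have hξy : (ξ, y) ∈ Metric.ball ((0 : ℝ), t) δ ∩ S := by
    constructor
    · rw [Metric.mem_ball, Prod.dist_eq]
      have h1 : dist ξ 0 < δ := by
        rw [Real.dist_eq, sub_zero, abs_of_pos hξ.1]
        have := hξ.2
        linarith [hyt ▸ hhlt]
      have h2 : dist y t < δ := by
        rw [Real.dist_eq, abs_of_pos (by linarith : (0:ℝ) < y - t)]
        linarith [hyt, hε0, hδ]
      exact max_lt h1 h2
    · exact ⟨le_of_lt hξ.1, by linarith [hξ.2, hhlt], hyy₂⟩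
  have := hball hξy
  simp only [mem_setOf_eq] at this
  linarith
end
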